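/- arXiv:2310.08425 — 4 statements merged into one kernel-verified Lean document; each statement's English description precedes it below -/
import Mathlib

section
/- Let B > 0, let σ: ℝ → [−B, B] be continuous and nondecreasing, let x ∈ ℝ^d with ‖x‖₂ ≤ 1, and let y ∈ [−B, B]. Then the function w ↦ ℓ(w; x, y) is convex on ℝ^d and is 2B-Lipschitz, i.e. |ℓ(w; x, y) − ℓ(w'; x, y)| ≤ 2B‖w − w'‖₂ for all w, w' ∈ ℝ^d. -/
open MeasureTheory
open scoped RealInnerProductSpace

/-!
The primitive `F t = ∫₀ᵗ (σ z - y) dz` has the nondecreasing derivative `σ t - y`, so it is convex;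
that derivative is bounded by `2B` because `σ t` and `y` both lie in `[-B, B]`, so `F` is
`2B`-Lipschitz. The loss is `F ∘ ⟪·, x⟫`; composing with a linear map keeps convexity, and
`⟪·, x⟫` is `1`-Lipschitz when `‖x‖ ≤ 1`.
-/

theorem convexOn_primitive_of_monotone {g : ℝ → ℝ} (hgc : Continuous g) (hgm : Monotone g)
    (a : ℝ) : ConvexOn ℝ Set.univ fun t => ∫ z in a..t, g z := by
  have hderiv : deriv (fun t => ∫ z in a..t, g z) = g :=
    funext (hgc.deriv_integral g a)
  refine Monotone.convexOn_univ_of_deriv (fun t => ?_) (by rwa [hderiv])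
  exact (hgc.integral_hasStrictDerivAt a t).hasDerivAt.differentiableAt

theorem abs_primitive_sub_le {g : ℝ → ℝ} (hg : ∀ s t : ℝ, IntervalIntegrable g volume s t)
    {C : ℝ} (hC : ∀ z, |g z| ≤ C) (a s t : ℝ) :
    |(∫ z in a..s, g z) - ∫ z in a..t, g z| ≤ C * |s - t| := by
  rw [intervalIntegral.integral_interval_sub_left (hg a s) (hg a t), ← Real.norm_eq_abs]
  exact intervalIntegral.norm_integral_le_of_norm_le_const fun z _ =>
    (Real.norm_eq_abs _).trans_le (hC z)

theorem abs_inner_sub_inner_le_norm_sub {E : Type*} [NormedAddCommGroup E] [InnerProductSpace ℝ E]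
    {x : E} (hx : ‖x‖ ≤ 1) (w w' : E) : |⟪w, x⟫ - ⟪w', x⟫| ≤ ‖w - w'‖ := by
  rw [← inner_sub_left]
  calc |⟪w - w', x⟫| ≤ ‖w - w'‖ * ‖x‖ := abs_real_inner_le_norm _ _
    _ ≤ ‖w - w'‖ := mul_le_of_le_one_right (norm_nonneg _) hx

theorem surrogate_loss_convex_lipschitz_general {d : ℕ} (B : ℝ)
    (σ : ℝ → ℝ) (hσc : Continuous σ) (hσm : Monotone σ)
    (hσr : ∀ z, σ z ∈ Set.Icc (-B) B)
    (x : EuclideanSpace ℝ (Fin d)) (hx : ‖x‖ ≤ 1)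
    (y : ℝ) (hy : y ∈ Set.Icc (-B) B) :
    ConvexOn ℝ Set.univ
        (fun w : EuclideanSpace ℝ (Fin d) => ∫ z in (0:ℝ)..(⟪w, x⟫), (σ z - y)) ∧
      ∀ w w' : EuclideanSpace ℝ (Fin d),
        |(∫ z in (0:ℝ)..(⟪w, x⟫), (σ z - y)) - ∫ z in (0:ℝ)..(⟪w', x⟫), (σ z - y)| ≤
          2 * B * ‖w - w'‖ := by
  have hgc : Continuous fun z => σ z - y := hσc.sub continuous_const
  have hgm : Monotone fun z => σ z - y := fun _ _ h => sub_le_sub_right (hσm h) y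
  have hgC : ∀ z, |σ z - y| ≤ 2 * B := fun z => by
    simpa [Real.dist_eq, two_mul] using Real.dist_le_of_mem_Icc (hσr z) hy
  refine ⟨?_, fun w w' => ?_⟩
  · simpa [Function.comp_def, real_inner_comm] using
      (convexOn_primitive_of_monotone hgc hgm 0).comp_linearMap (innerₛₗ ℝ x)
  · calc _ ≤ 2 * B * |⟪w, x⟫ - ⟪w', x⟫| :=
          abs_primitive_sub_le (fun _ _ => hgc.intervalIntegrable _ _) hgC 0 _ _
      _ ≤ 2 * B * ‖w - w'‖ :=
          mul_le_mul_of_nonneg_left (abs_inner_sub_inner_le_norm_sub hx w w')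
            ((abs_nonneg _).trans (hgC 0))

/-- For `B > 0`, a continuous nondecreasing link `σ : ℝ → [-B, B]`,
`x ∈ ℝ^d` with `‖x‖ ≤ 1` and `y ∈ [-B, B]`, the surrogate loss
`w ↦ ℓ(w; x, y) = ∫₀^{⟨w,x⟩} (σ z - y) dz` is convex on `ℝ^d` and `2B`-Lipschitz. -/
theorem surrogate_loss_convex_lipschitz {d : ℕ} (B : ℝ) (hB : 0 < B)
    (σ : ℝ → ℝ) (hσc : Continuous σ) (hσm : Monotone σ)
    (hσr : ∀ z, σ z ∈ Set.Icc (-B) B)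
    (x : EuclideanSpace ℝ (Fin d)) (hx : ‖x‖ ≤ 1)
    (y : ℝ) (hy : y ∈ Set.Icc (-B) B) :
    ConvexOn ℝ Set.univ
        (fun w : EuclideanSpace ℝ (Fin d) => ∫ z in (0:ℝ)..(⟪w, x⟫), (σ z - y)) ∧
      ∀ w w' : EuclideanSpace ℝ (Fin d),
        |(∫ z in (0:ℝ)..(⟪w, x⟫), (σ z - y)) - ∫ z in (0:ℝ)..(⟪w', x⟫), (σ z - y)| ≤
          2 * B * ‖w - w'‖ :=
  surrogate_loss_convex_lipschitz_general B σ hσc hσm hσr x hx y hy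
end

section
/- Under the well-specified model, for every w ∈ ℝ^d, L_P(w) − L_P(w*) ≤ 2G·(L^ℓ_P(w) − L^ℓ_P(w*)). -/
open MeasureTheory intervalIntegral
open scoped RealInnerProductSpace


lemma key_core {G : ℝ} (hG : 0 < G) {σ : ℝ → ℝ} (hσm : Monotone σ)
    (hσlip : ∀ a b : ℝ, |σ a - σ b| ≤ G * |a - b|) {a b : ℝ} (hab : a ≤ b) :
    (σ b - σ a) ^ 2 ≤ 2 * G * ∫ z in a..b, (σ z - σ a) := by
  set D := σ b - σ a with hD
  have hD0 : 0 ≤ D := sub_nonneg.2 (hσm hab)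
  have hDle : D ≤ G * (b - a) := by
    have := hσlip b a
    rwa [abs_of_nonneg hD0, abs_of_nonneg (sub_nonneg.2 hab)] at this
  set c := b - D / G with hc
  have hDG0 : 0 ≤ D / G := div_nonneg hD0 hG.le
  have hca : a ≤ c := by
    have : D / G ≤ b - a := (div_le_iff₀ hG).2 (by linarith [hDle])
    simp only [hc]; linarith
  have hcb : c ≤ b := by simp only [hc]; linarith
  have hfi : ∀ u v : ℝ, IntervalIntegrable (fun z => σ z - σ a) volume u v :=
    fun u v => (hσm.intervalIntegrable (a := u) (b := v)).sub intervalIntegrable_const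
  have hsplit : (∫ z in a..c, (σ z - σ a)) + (∫ z in c..b, (σ z - σ a))
      = ∫ z in a..b, (σ z - σ a) :=
    integral_add_adjacent_intervals (hfi a c) (hfi c b)
  have h1 : 0 ≤ ∫ z in a..c, (σ z - σ a) :=
    integral_nonneg hca (fun z hz => sub_nonneg.2 (hσm hz.1))
  have h2 : (∫ z in c..b, (D - G * (b - z))) ≤ ∫ z in c..b, (σ z - σ a) := by
    apply integral_mono_on hcb _ (hfi c b)
    · intro z hz
      have hzb : z ≤ b := hz.2
      have : σ b - σ z ≤ G * (b - z) := by
        have := hσlip b z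
        rwa [abs_of_nonneg (sub_nonneg.2 (hσm hzb)), abs_of_nonneg (sub_nonneg.2 hzb)] at this
      simp only [hD]; linarith
    · exact (continuous_const.sub (continuous_const.mul
        (continuous_sub_left b))).intervalIntegrable c b
  have h3 : (∫ z in c..b, (D - G * (b - z))) = D ^ 2 / (2 * G) := by
    have hbz : (∫ z in c..b, (b - z)) = (b - c) ^ 2 / 2 := by
      have := intervalIntegral.integral_comp_sub_left (a := c) (b := b) (fun x => x) b
      rw [this, integral_id]; ring_nf
    rw [intervalIntegral.integral_sub (g := fun z => G * (b - z)) intervalIntegrable_const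
      ((continuous_const.mul (continuous_sub_left b)).intervalIntegrable c b),
      intervalIntegral.integral_const, intervalIntegral.integral_const_mul, hbz]
    have hbc : b - c = D / G := by simp [hc]
    rw [hbc]
    field_simp
    ring_nf; field_simp; ring
  have : D ^ 2 / (2 * G) ≤ ∫ z in a..b, (σ z - σ a) := by
    rw [← hsplit, ← h3]; linarith
  calc (σ b - σ a) ^ 2 = 2 * G * (D ^ 2 / (2 * G)) := by field_simp; rfl
    _ ≤ 2 * G * ∫ z in a..b, (σ z - σ a) := by
        apply mul_le_mul_of_nonneg_left this (by linarith)

lemma key_pt {G : ℝ} (hG : 0 < G) {σ : ℝ → ℝ} (hσm : Monotone σ)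
    (hσlip : ∀ a b : ℝ, |σ a - σ b| ≤ G * |a - b|) (a b : ℝ) :
    (σ b - σ a) ^ 2 ≤ 2 * G * ∫ z in a..b, (σ z - σ a) := by
  rcases le_total a b with hab | hba
  · exact key_core hG hσm hσlip hab
  · set τ : ℝ → ℝ := fun z => -σ (-z) with hτ
    have hτm : Monotone τ := fun u v huv => by
      simp only [hτ, neg_le_neg_iff]
      exact hσm (neg_le_neg huv)
    have hτlip : ∀ u v : ℝ, |τ u - τ v| ≤ G * |u - v| := fun u v => by
      simp only [hτ]
      calc |-σ (-u) - -σ (-v)| = |σ (-v) - σ (-u)| := by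
            rw [show -σ (-u) - -σ (-v) = σ (-v) - σ (-u) by ring]
        _ ≤ G * |(-v) - (-u)| := hσlip _ _
        _ = G * |u - v| := by rw [neg_sub_neg, abs_sub_comm]
    have h := key_core hG hτm hτlip (a := -a) (b := -b) (by linarith)
    have hτb : τ (-b) = -σ b := by simp [hτ]
    have hτa : τ (-a) = -σ a := by simp [hτ]
    rw [hτb, hτa] at h
    have hL : (-σ b - -σ a) ^ 2 = (σ b - σ a) ^ 2 := by ring
    rw [hL] at h
    have hint : (∫ z in (-a)..(-b), (τ z - -σ a)) = ∫ z in a..b, (σ z - σ a) := by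
      have h1 : (∫ z in (-a)..(-b), (τ z - -σ a))
          = ∫ z in (-a)..(-b), (fun u => σ a - σ u) (-z) := by
        apply intervalIntegral.integral_congr
        intro z _; simp [hτ]; ring
      rw [h1, intervalIntegral.integral_comp_neg (fun u => σ a - σ u)]
      simp only [neg_neg]
      rw [intervalIntegral.integral_symm]
      rw [← intervalIntegral.integral_neg]
      apply intervalIntegral.integral_congr
      intro z _; ring
    rwa [hint] at h

/-- In the well-specified model (`σ : ℝ → [-B,B]` nondecreasing and
`G`-Lipschitz, `‖x‖ ≤ 1` a.s., `y ∈ [-B,B]` a.s., `E[y|x] = σ(⟨w*, x⟩)` a.s.),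
for every `w ∈ ℝ^d` the excess population risk is bounded by `2G` times the excess
surrogate population risk:
`L_P(w) − L_P(w*) ≤ 2G (L^ℓ_P(w) − L^ℓ_P(w*))`. -/
theorem excess_risk_le_surrogate {d : ℕ} (B G : ℝ) (hB : 0 < B) (hG : 0 < G)
    (σ : ℝ → ℝ) (hσm : Monotone σ) (hσr : ∀ z, σ z ∈ Set.Icc (-B) B)
    (hσlip : ∀ a b : ℝ, |σ a - σ b| ≤ G * |a - b|)
    (P : Measure (EuclideanSpace ℝ (Fin d) × ℝ)) [IsProbabilityMeasure P]
    (wstar : EuclideanSpace ℝ (Fin d))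
    (hx : ∀ᵐ p ∂P, ‖p.1‖ ≤ 1)
    (hy : ∀ᵐ p ∂P, p.2 ∈ Set.Icc (-B) B)
    (hcond :
      P[(fun p : EuclideanSpace ℝ (Fin d) × ℝ => p.2) |
          MeasurableSpace.comap Prod.fst inferInstance] =ᵐ[P]
        fun p => σ ⟪wstar, p.1⟫)
    (w : EuclideanSpace ℝ (Fin d)) :
    (∫ p, (σ ⟪w, p.1⟫ - p.2) ^ 2 ∂P) - (∫ p, (σ ⟪wstar, p.1⟫ - p.2) ^ 2 ∂P) ≤
      2 * G * ((∫ p, (∫ z in (0:ℝ)..(⟪w, p.1⟫), (σ z - p.2)) ∂P) -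
        ∫ p, (∫ z in (0:ℝ)..(⟪wstar, p.1⟫), (σ z - p.2)) ∂P) := by
  have hσB : ∀ z, |σ z| ≤ B := fun z => abs_le.2 ⟨(hσr z).1, (hσr z).2⟩
  have hσc : Continuous σ := by
    have : LipschitzWith (Real.toNNReal G) σ :=
      LipschitzWith.of_dist_le_mul fun a b => by
        rw [Real.dist_eq, Real.dist_eq, Real.coe_toNNReal G hG.le]; exact hσlip a b
    exact this.continuous
  set Φ : ℝ → ℝ := fun v => ∫ z in (0:ℝ)..v, σ z with hΦ
  have hΦc : Continuous Φ :=
    intervalIntegral.continuous_primitive (fun a b => hσc.intervalIntegrable a b) 0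
  have hΦb : ∀ v : ℝ, |Φ v| ≤ B * |v| := fun v => by
    have := intervalIntegral.norm_integral_le_of_norm_le_const
      (a := 0) (b := v) (C := B) (f := σ) (fun z _ => by simpa [Real.norm_eq_abs] using hσB z)
    simpa [Real.norm_eq_abs] using this
  -- measurability
  have mS : Measurable fun p : EuclideanSpace ℝ (Fin d) × ℝ => ⟪w, p.1⟫ :=
    (continuous_const.inner continuous_fst).measurable
  have mT : Measurable fun p : EuclideanSpace ℝ (Fin d) × ℝ => ⟪wstar, p.1⟫ :=
    (continuous_const.inner continuous_fst).measurable
  have mY : Measurable fun p : EuclideanSpace ℝ (Fin d) × ℝ => p.2 := measurable_snd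
  have mσS := hσc.measurable.comp mS
  have mσT := hσc.measurable.comp mT
  have mΦS := hΦc.measurable.comp mS
  have mΦT := hΦc.measurable.comp mT
  -- integrability helper
  have hbint : ∀ f : EuclideanSpace ℝ (Fin d) × ℝ → ℝ, Measurable f → ∀ C : ℝ,
      (∀ᵐ p ∂P, |f p| ≤ C) → Integrable f P := fun f hf C hC =>
    ⟨hf.aestronglyMeasurable, HasFiniteIntegral.of_bounded (C := C)
      (by simpa [Real.norm_eq_abs] using hC)⟩
  -- a.e. bounds
  have hSb : ∀ᵐ p ∂P, |(⟪w, p.1⟫ : ℝ)| ≤ ‖w‖ := hx.mono fun p hp => by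
    calc |(⟪w, p.1⟫ : ℝ)| ≤ ‖w‖ * ‖p.1‖ := abs_real_inner_le_norm w p.1
      _ ≤ ‖w‖ * 1 := mul_le_mul_of_nonneg_left hp (norm_nonneg w)
      _ = ‖w‖ := mul_one _
  have hTb : ∀ᵐ p ∂P, |(⟪wstar, p.1⟫ : ℝ)| ≤ ‖wstar‖ := hx.mono fun p hp => by
    calc |(⟪wstar, p.1⟫ : ℝ)| ≤ ‖wstar‖ * ‖p.1‖ := abs_real_inner_le_norm wstar p.1
      _ ≤ ‖wstar‖ * 1 := mul_le_mul_of_nonneg_left hp (norm_nonneg wstar)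
      _ = ‖wstar‖ := mul_one _
  have hYb : ∀ᵐ p ∂P, |p.2| ≤ B := hy.mono fun p hp => abs_le.2 ⟨hp.1, hp.2⟩
  -- cross lemma via conditional expectation
  have hm : (MeasurableSpace.comap (Prod.fst :
        EuclideanSpace ℝ (Fin d) × ℝ → EuclideanSpace ℝ (Fin d)) inferInstance) ≤
      (inferInstance : MeasurableSpace (EuclideanSpace ℝ (Fin d) × ℝ)) :=
    measurable_iff_comap_le.mp measurable_fst
  have hfstm : Measurable[MeasurableSpace.comap Prod.fst inferInstance]
      (Prod.fst : EuclideanSpace ℝ (Fin d) × ℝ → EuclideanSpace ℝ (Fin d)) :=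
    measurable_iff_comap_le.mpr le_rfl
  have cross : ∀ ψ : EuclideanSpace ℝ (Fin d) → ℝ, Measurable ψ → ∀ C : ℝ,
      (∀ᵐ p ∂P, |ψ p.1| ≤ C) →
      ∫ p, ψ p.1 * p.2 ∂P = ∫ p, ψ p.1 * σ ⟪wstar, p.1⟫ ∂P := by
    intro ψ hψ C hC
    have hf_sm : StronglyMeasurable[MeasurableSpace.comap Prod.fst inferInstance]
        (fun p : EuclideanSpace ℝ (Fin d) × ℝ => ψ p.1) :=
      (hψ.comp hfstm).stronglyMeasurable
    have hY_int : Integrable (fun p : EuclideanSpace ℝ (Fin d) × ℝ => p.2) P :=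
      hbint _ mY B hYb
    have hfY_int : Integrable ((fun p : EuclideanSpace ℝ (Fin d) × ℝ => ψ p.1) *
        fun p => p.2) P := by
      apply hbint _ ((hψ.comp measurable_fst).mul mY) (|C| * B)
      filter_upwards [hC, hYb] with p h1 h2
      simp only [Pi.mul_apply, abs_mul]
      exact mul_le_mul (h1.trans (le_abs_self C)) h2 (abs_nonneg _) (abs_nonneg _)
    have h2 := condExp_mul_of_stronglyMeasurable_left hf_sm hfY_int hY_int
    calc ∫ p, ψ p.1 * p.2 ∂P
        = ∫ p, ((fun p : EuclideanSpace ℝ (Fin d) × ℝ => ψ p.1) *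
            (fun p : EuclideanSpace ℝ (Fin d) × ℝ => p.2)) p ∂P := rfl
      _ = ∫ p, (P[(fun p : EuclideanSpace ℝ (Fin d) × ℝ => ψ p.1) * fun p => p.2 |
            MeasurableSpace.comap Prod.fst inferInstance]) p ∂P := (integral_condExp hm).symm
      _ = ∫ p, ψ p.1 * (P[(fun p : EuclideanSpace ℝ (Fin d) × ℝ => p.2) |
            MeasurableSpace.comap Prod.fst inferInstance]) p ∂P :=
          integral_congr_ae (h2.mono fun p hp => by simpa using hp)
      _ = ∫ p, ψ p.1 * σ ⟪wstar, p.1⟫ ∂P :=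
          integral_congr_ae (hcond.mono fun p hp => by dsimp only; rw [hp])
  -- the two cross identities
  have hcross1 : ∫ p, (σ ⟪w, p.1⟫ - σ ⟪wstar, p.1⟫) * p.2 ∂P
      = ∫ p, (σ ⟪w, p.1⟫ - σ ⟪wstar, p.1⟫) * σ ⟪wstar, p.1⟫ ∂P := by
    apply cross _ ((hσc.measurable.comp (continuous_const.inner continuous_id).measurable).sub
      (hσc.measurable.comp (continuous_const.inner continuous_id).measurable)) (2 * B)
    filter_upwards with p
    calc |σ ⟪w, p.1⟫ - σ ⟪wstar, p.1⟫| ≤ |σ ⟪w, p.1⟫| + |σ ⟪wstar, p.1⟫| := abs_sub _ _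
      _ ≤ B + B := add_le_add (hσB _) (hσB _)
      _ = 2 * B := by ring
  have hcross2 : ∫ p, ((⟪w, p.1⟫ : ℝ) - ⟪wstar, p.1⟫) * p.2 ∂P
      = ∫ p, ((⟪w, p.1⟫ : ℝ) - ⟪wstar, p.1⟫) * σ ⟪wstar, p.1⟫ ∂P := by
    apply cross _ (((continuous_const.inner continuous_id).sub
      (continuous_const.inner continuous_id)).measurable) (‖w‖ + ‖wstar‖)
    filter_upwards [hSb, hTb] with p h1 h2
    calc |(⟪w, p.1⟫ : ℝ) - ⟪wstar, p.1⟫| ≤ |(⟪w, p.1⟫ : ℝ)| + |(⟪wstar, p.1⟫ : ℝ)| := abs_sub _ _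
      _ ≤ ‖w‖ + ‖wstar‖ := add_le_add h1 h2
  -- integrabilities
  have intF1 : Integrable (fun p => (σ ⟪w, p.1⟫ - p.2) ^ 2) P := by
    apply hbint _ ((mσS.sub mY).pow_const 2) ((2 * B) ^ 2)
    filter_upwards [hYb] with p h2
    rw [abs_pow]
    apply pow_le_pow_left₀ (abs_nonneg _)
    calc |σ ⟪w, p.1⟫ - p.2| ≤ |σ ⟪w, p.1⟫| + |p.2| := abs_sub _ _
      _ ≤ B + B := add_le_add (hσB _) h2
      _ = 2 * B := by ring
  have intF2 : Integrable (fun p => (σ ⟪wstar, p.1⟫ - p.2) ^ 2) P := by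
    apply hbint _ ((mσT.sub mY).pow_const 2) ((2 * B) ^ 2)
    filter_upwards [hYb] with p h2
    rw [abs_pow]
    apply pow_le_pow_left₀ (abs_nonneg _)
    calc |σ ⟪wstar, p.1⟫ - p.2| ≤ |σ ⟪wstar, p.1⟫| + |p.2| := abs_sub _ _
      _ ≤ B + B := add_le_add (hσB _) h2
      _ = 2 * B := by ring
  have habsσσ : ∀ p : EuclideanSpace ℝ (Fin d) × ℝ,
      |σ ⟪w, p.1⟫ - σ ⟪wstar, p.1⟫| ≤ 2 * B := fun p => by
    calc |σ ⟪w, p.1⟫ - σ ⟪wstar, p.1⟫| ≤ |σ ⟪w, p.1⟫| + |σ ⟪wstar, p.1⟫| := abs_sub _ _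
      _ ≤ B + B := add_le_add (hσB _) (hσB _)
      _ = 2 * B := by ring
  have intQ : Integrable (fun p => (σ ⟪w, p.1⟫ - σ ⟪wstar, p.1⟫) ^ 2) P := by
    apply hbint _ ((mσS.sub mσT).pow_const 2) ((2 * B) ^ 2)
    filter_upwards with p
    rw [abs_pow]
    exact pow_le_pow_left₀ (abs_nonneg _) (habsσσ p) 2
  have intC1 : Integrable (fun p => (σ ⟪w, p.1⟫ - σ ⟪wstar, p.1⟫) * σ ⟪wstar, p.1⟫) P := by
    apply hbint _ ((mσS.sub mσT).mul mσT) (2 * B * B)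
    filter_upwards with p
    rw [Pi.mul_apply, abs_mul]
    exact mul_le_mul (habsσσ p) (hσB _) (abs_nonneg _) (by linarith)
  have intC1' : Integrable (fun p => (σ ⟪w, p.1⟫ - σ ⟪wstar, p.1⟫) * p.2) P := by
    apply hbint _ ((mσS.sub mσT).mul mY) (2 * B * B)
    filter_upwards [hYb] with p h2
    rw [Pi.mul_apply, abs_mul]
    exact mul_le_mul (habsσσ p) h2 (abs_nonneg _) (by linarith)
  have intK : Integrable (fun p => Φ ⟪w, p.1⟫ - Φ ⟪wstar, p.1⟫ -
      ((⟪w, p.1⟫ : ℝ) - ⟪wstar, p.1⟫) * σ ⟪wstar, p.1⟫) P := by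
    apply hbint _ (((mΦS.sub mΦT)).sub ((mS.sub mT).mul mσT))
      (B * ‖w‖ + B * ‖wstar‖ + (‖w‖ + ‖wstar‖) * B)
    filter_upwards [hSb, hTb] with p h1 h2
    have e1 : |Φ ⟪w, p.1⟫| ≤ B * ‖w‖ :=
      (hΦb _).trans (mul_le_mul_of_nonneg_left h1 hB.le)
    have e2 : |Φ ⟪wstar, p.1⟫| ≤ B * ‖wstar‖ :=
      (hΦb _).trans (mul_le_mul_of_nonneg_left h2 hB.le)
    have e3 : |((⟪w, p.1⟫ : ℝ) - ⟪wstar, p.1⟫) * σ ⟪wstar, p.1⟫| ≤ (‖w‖ + ‖wstar‖) * B := by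
      rw [abs_mul]
      apply mul_le_mul _ (hσB _) (abs_nonneg _) (by positivity)
      calc |(⟪w, p.1⟫ : ℝ) - ⟪wstar, p.1⟫| ≤ |(⟪w, p.1⟫ : ℝ)| + |(⟪wstar, p.1⟫ : ℝ)| :=
            abs_sub _ _
        _ ≤ ‖w‖ + ‖wstar‖ := add_le_add h1 h2
    calc |Φ ⟪w, p.1⟫ - Φ ⟪wstar, p.1⟫ - ((⟪w, p.1⟫ : ℝ) - ⟪wstar, p.1⟫) * σ ⟪wstar, p.1⟫|
        ≤ |Φ ⟪w, p.1⟫ - Φ ⟪wstar, p.1⟫| + |((⟪w, p.1⟫ : ℝ) - ⟪wstar, p.1⟫) * σ ⟪wstar, p.1⟫| :=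
          abs_sub _ _
      _ ≤ (|Φ ⟪w, p.1⟫| + |Φ ⟪wstar, p.1⟫|) + |((⟪w, p.1⟫ : ℝ) - ⟪wstar, p.1⟫) * σ ⟪wstar, p.1⟫| :=
          add_le_add (abs_sub _ _) le_rfl
      _ ≤ B * ‖w‖ + B * ‖wstar‖ + (‖w‖ + ‖wstar‖) * B := by
          have := add_le_add (add_le_add e1 e2) e3; linarith
  have intSTσ : Integrable (fun p => ((⟪w, p.1⟫ : ℝ) - ⟪wstar, p.1⟫) * σ ⟪wstar, p.1⟫) P := by
    apply hbint _ ((mS.sub mT).mul mσT) ((‖w‖ + ‖wstar‖) * B)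
    filter_upwards [hSb, hTb] with p h1 h2
    rw [Pi.mul_apply, abs_mul]
    apply mul_le_mul _ (hσB _) (abs_nonneg _) (by positivity)
    calc |(⟪w, p.1⟫ : ℝ) - ⟪wstar, p.1⟫| ≤ |(⟪w, p.1⟫ : ℝ)| + |(⟪wstar, p.1⟫ : ℝ)| := abs_sub _ _
      _ ≤ ‖w‖ + ‖wstar‖ := add_le_add h1 h2
  have intSTY : Integrable (fun p => ((⟪w, p.1⟫ : ℝ) - ⟪wstar, p.1⟫) * p.2) P := by
    apply hbint _ ((mS.sub mT).mul mY) ((‖w‖ + ‖wstar‖) * B)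
    filter_upwards [hSb, hTb, hYb] with p h1 h2 h3
    rw [Pi.mul_apply, abs_mul]
    apply mul_le_mul _ h3 (abs_nonneg _) (by positivity)
    calc |(⟪w, p.1⟫ : ℝ) - ⟪wstar, p.1⟫| ≤ |(⟪w, p.1⟫ : ℝ)| + |(⟪wstar, p.1⟫ : ℝ)| := abs_sub _ _
      _ ≤ ‖w‖ + ‖wstar‖ := add_le_add h1 h2
  have intU1 : Integrable (fun p => Φ ⟪w, p.1⟫ - (⟪w, p.1⟫ : ℝ) * p.2) P := by
    apply hbint _ (mΦS.sub (mS.mul mY)) (B * ‖w‖ + ‖w‖ * B)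
    filter_upwards [hSb, hYb] with p h1 h3
    calc |Φ ⟪w, p.1⟫ - (⟪w, p.1⟫ : ℝ) * p.2| ≤ |Φ ⟪w, p.1⟫| + |(⟪w, p.1⟫ : ℝ) * p.2| := abs_sub _ _
      _ ≤ B * ‖w‖ + ‖w‖ * B := by
          apply add_le_add ((hΦb _).trans (mul_le_mul_of_nonneg_left h1 hB.le))
          rw [abs_mul]
          exact mul_le_mul h1 h3 (abs_nonneg _) (norm_nonneg _)
  have intU2 : Integrable (fun p => Φ ⟪wstar, p.1⟫ - (⟪wstar, p.1⟫ : ℝ) * p.2) P := by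
    apply hbint _ (mΦT.sub (mT.mul mY)) (B * ‖wstar‖ + ‖wstar‖ * B)
    filter_upwards [hTb, hYb] with p h1 h3
    calc |Φ ⟪wstar, p.1⟫ - (⟪wstar, p.1⟫ : ℝ) * p.2|
        ≤ |Φ ⟪wstar, p.1⟫| + |(⟪wstar, p.1⟫ : ℝ) * p.2| := abs_sub _ _
      _ ≤ B * ‖wstar‖ + ‖wstar‖ * B := by
          apply add_le_add ((hΦb _).trans (mul_le_mul_of_nonneg_left h1 hB.le))
          rw [abs_mul]
          exact mul_le_mul h1 h3 (abs_nonneg _) (norm_nonneg _)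
  -- rewrite the surrogate integrals
  have hsur : ∀ (c yy : ℝ), (∫ z in (0:ℝ)..c, (σ z - yy)) = Φ c - c * yy := by
    intro c yy
    rw [intervalIntegral.integral_sub (hσc.intervalIntegrable _ _) intervalIntegrable_const,
      intervalIntegral.integral_const]
    simp [smul_eq_mul, hΦ]
  have g1 : (∫ p, (∫ z in (0:ℝ)..(⟪w, p.1⟫), (σ z - p.2)) ∂P)
      = ∫ p, (Φ ⟪w, p.1⟫ - (⟪w, p.1⟫ : ℝ) * p.2) ∂P :=
    integral_congr_ae (Filter.Eventually.of_forall fun p => hsur _ _)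
  have g2 : (∫ p, (∫ z in (0:ℝ)..(⟪wstar, p.1⟫), (σ z - p.2)) ∂P)
      = ∫ p, (Φ ⟪wstar, p.1⟫ - (⟪wstar, p.1⟫ : ℝ) * p.2) ∂P :=
    integral_congr_ae (Filter.Eventually.of_forall fun p => hsur _ _)
  -- key identity 1
  have key1 : (∫ p, (σ ⟪w, p.1⟫ - p.2) ^ 2 ∂P) - (∫ p, (σ ⟪wstar, p.1⟫ - p.2) ^ 2 ∂P)
      = ∫ p, (σ ⟪w, p.1⟫ - σ ⟪wstar, p.1⟫) ^ 2 ∂P := by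
    rw [← integral_sub intF1 intF2]
    have : (∫ p, ((σ ⟪w, p.1⟫ - p.2) ^ 2 - (σ ⟪wstar, p.1⟫ - p.2) ^ 2) ∂P)
        = ∫ p, ((σ ⟪w, p.1⟫ - σ ⟪wstar, p.1⟫) ^ 2
            + 2 * ((σ ⟪w, p.1⟫ - σ ⟪wstar, p.1⟫) * σ ⟪wstar, p.1⟫)
            - 2 * ((σ ⟪w, p.1⟫ - σ ⟪wstar, p.1⟫) * p.2)) ∂P :=
      integral_congr_ae (Filter.Eventually.of_forall fun p => by ring)
    have intQC1 : Integrable (fun p => (σ ⟪w, p.1⟫ - σ ⟪wstar, p.1⟫) ^ 2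
        + 2 * ((σ ⟪w, p.1⟫ - σ ⟪wstar, p.1⟫) * σ ⟪wstar, p.1⟫)) P :=
      intQ.add (intC1.const_mul 2)
    rw [this, integral_sub intQC1 (intC1'.const_mul 2),
      integral_add intQ (intC1.const_mul 2), MeasureTheory.integral_const_mul,
      MeasureTheory.integral_const_mul, ← hcross1]
    ring
  -- key identity 2
  have key2 : (∫ p, (Φ ⟪w, p.1⟫ - (⟪w, p.1⟫ : ℝ) * p.2) ∂P)
      - (∫ p, (Φ ⟪wstar, p.1⟫ - (⟪wstar, p.1⟫ : ℝ) * p.2) ∂P)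
      = ∫ p, (Φ ⟪w, p.1⟫ - Φ ⟪wstar, p.1⟫
          - ((⟪w, p.1⟫ : ℝ) - ⟪wstar, p.1⟫) * σ ⟪wstar, p.1⟫) ∂P := by
    rw [← integral_sub intU1 intU2]
    have : (∫ p, ((Φ ⟪w, p.1⟫ - (⟪w, p.1⟫ : ℝ) * p.2)
          - (Φ ⟪wstar, p.1⟫ - (⟪wstar, p.1⟫ : ℝ) * p.2)) ∂P)
        = ∫ p, ((Φ ⟪w, p.1⟫ - Φ ⟪wstar, p.1⟫
            - ((⟪w, p.1⟫ : ℝ) - ⟪wstar, p.1⟫) * σ ⟪wstar, p.1⟫)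
            + ((⟪w, p.1⟫ : ℝ) - ⟪wstar, p.1⟫) * σ ⟪wstar, p.1⟫
            - ((⟪w, p.1⟫ : ℝ) - ⟪wstar, p.1⟫) * p.2) ∂P :=
      integral_congr_ae (Filter.Eventually.of_forall fun p => by ring)
    have intKS : Integrable (fun p => (Φ ⟪w, p.1⟫ - Φ ⟪wstar, p.1⟫
        - ((⟪w, p.1⟫ : ℝ) - ⟪wstar, p.1⟫) * σ ⟪wstar, p.1⟫)
        + ((⟪w, p.1⟫ : ℝ) - ⟪wstar, p.1⟫) * σ ⟪wstar, p.1⟫) P := intK.add intSTσ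
    rw [this, integral_sub intKS intSTY, integral_add intK intSTσ, ← hcross2]
    ring
  -- pointwise inequality
  have hKrep : ∀ p : EuclideanSpace ℝ (Fin d) × ℝ,
      (∫ z in (⟪wstar, p.1⟫ : ℝ)..(⟪w, p.1⟫ : ℝ), (σ z - σ ⟪wstar, p.1⟫))
      = Φ ⟪w, p.1⟫ - Φ ⟪wstar, p.1⟫ - ((⟪w, p.1⟫ : ℝ) - ⟪wstar, p.1⟫) * σ ⟪wstar, p.1⟫ := by
    intro p
    rw [intervalIntegral.integral_sub (hσc.intervalIntegrable _ _) intervalIntegrable_const,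
      intervalIntegral.integral_const]
    have : (∫ z in (⟪wstar, p.1⟫ : ℝ)..(⟪w, p.1⟫ : ℝ), σ z) = Φ ⟪w, p.1⟫ - Φ ⟪wstar, p.1⟫ := by
      rw [hΦ]
      exact (intervalIntegral.integral_interval_sub_left (hσc.intervalIntegrable _ _)
        (hσc.intervalIntegrable _ _)).symm
    rw [this, smul_eq_mul]
  have key3 : (∫ p, (σ ⟪w, p.1⟫ - σ ⟪wstar, p.1⟫) ^ 2 ∂P)
      ≤ 2 * G * ∫ p, (Φ ⟪w, p.1⟫ - Φ ⟪wstar, p.1⟫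
          - ((⟪w, p.1⟫ : ℝ) - ⟪wstar, p.1⟫) * σ ⟪wstar, p.1⟫) ∂P := by
    rw [← MeasureTheory.integral_const_mul]
    apply integral_mono intQ (intK.const_mul _)
    intro p
    have := key_pt hG hσm hσlip (⟪wstar, p.1⟫ : ℝ) (⟪w, p.1⟫ : ℝ)
    rwa [hKrep p] at this
  rw [g1, g2, key1, key2]
  exact key3
end

section
/- Under the noisy-feature well-specified model, for every w ∈ ℝ^k: E[(σ(⟨w, ψ(x)⟩) − σ(⟨w*, ψ(x)⟩ + φ(x)))²] ≤ 4G·(L^ℓ_P(w) − L^ℓ_P(w*)) + 2G²M² + 8GM. -/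
open MeasureTheory
open scoped RealInnerProductSpace

private lemma sigma_key_le (G : ℝ) (hG : 0 < G) (σ : ℝ → ℝ) (hσm : Monotone σ)
    (hσlip : ∀ a b : ℝ, |σ a - σ b| ≤ G * |a - b|) {s t : ℝ} (hst : s ≤ t) :
    (σ t - σ s) ^ 2 ≤ 2 * G * ∫ z in s..t, (σ z - σ s) := by
  set D := σ t - σ s with hDdef
  have hD0 : 0 ≤ D := sub_nonneg.2 (hσm hst)
  have hDle : D ≤ G * (t - s) := by
    have h := hσlip t s
    rwa [abs_of_nonneg hD0, abs_of_nonneg (sub_nonneg.2 hst)] at h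
  set u := t - D / G with hudef
  have hut : u ≤ t := by
    have : 0 ≤ D / G := div_nonneg hD0 hG.le
    simp only [hudef]; linarith
  have hsu : s ≤ u := by
    have hDG : D / G ≤ t - s := by rw [div_le_iff₀ hG]; linarith
    simp only [hudef]; linarith
  have hInt : ∀ p q : ℝ, IntervalIntegrable (fun z => σ z - σ s) MeasureTheory.volume p q :=
    fun p q => (hσm.intervalIntegrable).sub intervalIntegrable_const
  have hIntLin : IntervalIntegrable (fun z => D - G * (t - z)) MeasureTheory.volume u t :=
    ((continuous_const.sub (continuous_const.mul (continuous_const.sub continuous_id))).intervalIntegrable _ _)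
  have hsplit : (∫ z in s..t, (σ z - σ s)) =
      (∫ z in s..u, (σ z - σ s)) + ∫ z in u..t, (σ z - σ s) :=
    (intervalIntegral.integral_add_adjacent_intervals (hInt s u) (hInt u t)).symm
  have h1 : 0 ≤ ∫ z in s..u, (σ z - σ s) :=
    intervalIntegral.integral_nonneg hsu fun z hz => sub_nonneg.2 (hσm hz.1)
  have h2 : (∫ z in u..t, (D - G * (t - z))) ≤ ∫ z in u..t, (σ z - σ s) := by
    apply intervalIntegral.integral_mono_on hut hIntLin (hInt u t)
    intro z hz
    have h := hσlip t z
    rw [abs_of_nonneg (sub_nonneg.2 (hσm hz.2)), abs_of_nonneg (sub_nonneg.2 hz.2)] at h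
    simp only [hDdef]; linarith
  have h3 : (∫ z in u..t, (D - G * (t - z))) = D ^ 2 / (2 * G) := by
    have hrw : ∀ z : ℝ, D - G * (t - z) = (D - G * t) + G * z := fun z => by ring
    simp only [hrw]
    rw [intervalIntegral.integral_add (g := fun z : ℝ => G * z) intervalIntegrable_const
      ((continuous_const.mul continuous_id').intervalIntegrable _ _),
      intervalIntegral.integral_const, intervalIntegral.integral_const_mul, integral_id]
    simp only [smul_eq_mul, hudef]
    field_simp
    ring
  have h4 : D ^ 2 / (2 * G) ≤ ∫ z in s..t, (σ z - σ s) := by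
    rw [hsplit, ← h3]; linarith
  calc D ^ 2 = 2 * G * (D ^ 2 / (2 * G)) := by field_simp
  _ ≤ 2 * G * ∫ z in s..t, (σ z - σ s) := by
      apply mul_le_mul_of_nonneg_left h4 (by positivity)

private lemma sigma_key (G : ℝ) (hG : 0 < G) (σ : ℝ → ℝ) (hσm : Monotone σ)
    (hσlip : ∀ a b : ℝ, |σ a - σ b| ≤ G * |a - b|) (s t : ℝ) :
    (σ t - σ s) ^ 2 ≤ 2 * G * ∫ z in s..t, (σ z - σ s) := by
  rcases le_total s t with h | h
  · exact sigma_key_le G hG σ hσm hσlip h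
  · have hτm : Monotone (fun z => -σ (-z)) :=
      fun x y hxy => neg_le_neg (hσm (neg_le_neg hxy))
    have hτlip : ∀ p q : ℝ, |(fun z => -σ (-z)) p - (fun z => -σ (-z)) q| ≤ G * |p - q| := by
      intro p q
      simp only
      have h1 : -σ (-p) - -σ (-q) = σ (-q) - σ (-p) := by ring
      have h2 := hσlip (-q) (-p)
      have h3 : (-q) - (-p) = p - q := by ring
      rw [h3] at h2
      rw [h1]; exact h2
    have key := sigma_key_le G hG (fun z => -σ (-z)) hτm hτlip (s := -s) (t := -t) (by linarith)
    have e1 : ((fun z : ℝ => -σ (-z)) (-t) - (fun z : ℝ => -σ (-z)) (-s)) ^ 2 = (σ t - σ s) ^ 2 := by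
      simp only [neg_neg]; ring
    have e2 : (∫ z in (-s)..(-t), ((fun z : ℝ => -σ (-z)) z - (fun z : ℝ => -σ (-z)) (-s))) =
        ∫ z in s..t, (σ z - σ s) := by
      have hc := intervalIntegral.integral_comp_neg (a := -s) (b := -t) (f := fun x => σ s - σ x)
      simp only [neg_neg] at hc
      calc (∫ z in (-s)..(-t), ((fun z : ℝ => -σ (-z)) z - (fun z : ℝ => -σ (-z)) (-s)))
          = ∫ z in (-s)..(-t), (σ s - σ (-z)) := by
            apply intervalIntegral.integral_congr
            intro z _
            simp only [neg_neg]; ring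
        _ = ∫ x in t..s, (σ s - σ x) := hc
        _ = ∫ x in t..s, -(σ x - σ s) := by
            apply intervalIntegral.integral_congr
            intro x _; ring
        _ = -∫ x in t..s, (σ x - σ s) := intervalIntegral.integral_neg
        _ = ∫ x in s..t, (σ x - σ s) := by rw [intervalIntegral.integral_symm s t, neg_neg]
    calc (σ t - σ s) ^ 2 = _ := e1.symm
    _ ≤ 2 * G * ∫ z in (-s)..(-t), ((fun z : ℝ => -σ (-z)) z - (fun z : ℝ => -σ (-z)) (-s)) := key
    _ = 2 * G * ∫ z in s..t, (σ z - σ s) := by rw [e2]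

private lemma main_aux {Ω : Type*} (m : MeasurableSpace Ω) [inst : MeasurableSpace Ω]
    (P : Measure Ω) [IsProbabilityMeasure P]
    (G M : ℝ) (hG : 0 < G) (hM : 0 ≤ M)
    (σ : ℝ → ℝ) (hσm : Monotone σ) (hσr : ∀ z, σ z ∈ Set.Icc (0 : ℝ) 1)
    (hσlip : ∀ a b : ℝ, |σ a - σ b| ≤ G * |a - b|)
    (a b c Y : Ω → ℝ) (ha : Measurable a) (hb : Measurable b) (hc : Measurable c)
    (hYmeas : Measurable Y)
    (Ka Kb : ℝ) (haB : ∀ ω, |a ω| ≤ Ka) (hbB : ∀ ω, |b ω| ≤ Kb)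
    (hcB : ∀ ω, |c ω - b ω| ≤ M)
    (hYb : ∀ᵐ ω ∂P, Y ω ∈ Set.Icc (0 : ℝ) 1)
    (hm : m ≤ inst)
    (hfm : Measurable[m] (fun ω => a ω - b ω))
    (hcond : P[Y | m] =ᵐ[P] fun ω => σ (c ω)) :
    (∫ ω, (σ (a ω) - σ (c ω)) ^ 2 ∂P) ≤
      4 * G * ((∫ ω, (∫ z in (0:ℝ)..(a ω), (σ z - Y ω)) ∂P) -
          ∫ ω, (∫ z in (0:ℝ)..(b ω), (σ z - Y ω)) ∂P) +
        2 * G ^ 2 * M ^ 2 + 8 * G * M := by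
  have hσint : ∀ p q : ℝ, IntervalIntegrable σ MeasureTheory.volume p q :=
    fun p q => hσm.intervalIntegrable
  have hσ1 : ∀ z, |σ z| ≤ 1 := fun z =>
    abs_le.mpr ⟨by linarith [(hσr z).1], (hσr z).2⟩
  have hσmeas : Measurable σ := hσm.measurable
  -- primitive
  have hΦc : Continuous (fun t : ℝ => ∫ z in (0:ℝ)..t, σ z) :=
    intervalIntegral.continuous_primitive (fun _ _ => hσm.intervalIntegrable) 0
  have hprim : ∀ t : ℝ, |∫ z in (0:ℝ)..t, σ z| ≤ |t| := by
    intro t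
    have h := intervalIntegral.norm_integral_le_of_norm_le_const
      (C := 1) (f := σ) (a := (0:ℝ)) (b := t)
      (fun x _ => by rw [Real.norm_eq_abs]; exact hσ1 x)
    simpa [Real.norm_eq_abs] using h
  -- rewriting inner integrals
  have hIw : ∀ ω, (∫ z in (0:ℝ)..(a ω), (σ z - Y ω)) =
      (∫ z in (0:ℝ)..(a ω), σ z) - Y ω * a ω := by
    intro ω
    rw [intervalIntegral.integral_sub (hσint _ _) intervalIntegrable_const,
      intervalIntegral.integral_const]
    simp [smul_eq_mul, mul_comm]
  have hIs : ∀ ω, (∫ z in (0:ℝ)..(b ω), (σ z - Y ω)) =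
      (∫ z in (0:ℝ)..(b ω), σ z) - Y ω * b ω := by
    intro ω
    rw [intervalIntegral.integral_sub (hσint _ _) intervalIntegrable_const,
      intervalIntegral.integral_const]
    simp [smul_eq_mul, mul_comm]
  -- the function F
  set F : Ω → ℝ := fun ω =>
    ((∫ z in (0:ℝ)..(a ω), σ z) - ∫ z in (0:ℝ)..(b ω), σ z) - σ (c ω) * (a ω - b ω)
    with hFdef
  have hFeq : ∀ ω, F ω = ∫ z in (b ω)..(a ω), (σ z - σ (c ω)) := by
    intro ω
    rw [hFdef]
    rw [intervalIntegral.integral_sub (hσint _ _) intervalIntegrable_const,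
      intervalIntegral.integral_const,
      ← intervalIntegral.integral_interval_sub_left (hσint 0 (a ω)) (hσint 0 (b ω))]
    simp only [smul_eq_mul]
    ring
  -- measurability
  have hPa : Measurable (fun ω => ∫ z in (0:ℝ)..(a ω), σ z) := hΦc.measurable.comp ha
  have hPb : Measurable (fun ω => ∫ z in (0:ℝ)..(b ω), σ z) := hΦc.measurable.comp hb
  have hgmeas : Measurable (fun ω => σ (c ω)) := hσmeas.comp hc
  have hFmeas : Measurable F := (hPa.sub hPb).sub (hgmeas.mul (ha.sub hb))
  -- bounds
  have habB : ∀ ω, |a ω - b ω| ≤ Ka + Kb := fun ω =>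
    (abs_sub _ _).trans (add_le_add (haB ω) (hbB ω))
  have hne : Nonempty Ω := by
    by_contra h
    have h1 : P Set.univ = 1 := measure_univ
    rw [Set.univ_eq_empty_iff.mpr (not_nonempty_iff.mp h)] at h1
    simp at h1
  have hK0 : (0:ℝ) ≤ Ka + Kb := le_trans (abs_nonneg _) (habB (Classical.arbitrary _))
  have hKa0 : (0:ℝ) ≤ Ka := le_trans (abs_nonneg _) (haB (Classical.arbitrary _))
  have hKb0 : (0:ℝ) ≤ Kb := le_trans (abs_nonneg _) (hbB (Classical.arbitrary _))
  have hFB : ∀ ω, |F ω| ≤ 2 * (Ka + Kb) := by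
    intro ω
    have h1 : |(∫ z in (0:ℝ)..(a ω), σ z) - ∫ z in (0:ℝ)..(b ω), σ z| ≤ |a ω - b ω| := by
      rw [intervalIntegral.integral_interval_sub_left (hσint 0 (a ω)) (hσint 0 (b ω))]
      have h := intervalIntegral.norm_integral_le_of_norm_le_const
        (C := 1) (f := σ) (a := b ω) (b := a ω)
        (fun x _ => by rw [Real.norm_eq_abs]; exact hσ1 x)
      simpa [Real.norm_eq_abs] using h
    have h2 : |σ (c ω) * (a ω - b ω)| ≤ |a ω - b ω| := by
      rw [abs_mul]
      calc |σ (c ω)| * |a ω - b ω| ≤ 1 * |a ω - b ω| :=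
        mul_le_mul_of_nonneg_right (hσ1 _) (abs_nonneg _)
      _ = |a ω - b ω| := one_mul _
    calc |F ω| ≤ |(∫ z in (0:ℝ)..(a ω), σ z) - ∫ z in (0:ℝ)..(b ω), σ z|
        + |σ (c ω) * (a ω - b ω)| := abs_sub _ _
    _ ≤ |a ω - b ω| + |a ω - b ω| := add_le_add h1 h2
    _ ≤ 2 * (Ka + Kb) := by linarith [habB ω]
  -- integrability helper
  have hIntOf : ∀ (f : Ω → ℝ) (C : ℝ), Measurable f → (∀ᵐ ω ∂P, |f ω| ≤ C) →
      Integrable f P := fun f C hf h =>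
    (integrable_const C).mono' hf.aestronglyMeasurable (by simpa [Real.norm_eq_abs] using h)
  have hYb' : ∀ᵐ ω ∂P, |Y ω| ≤ 1 :=
    hYb.mono fun ω h => abs_le.mpr ⟨by linarith [h.1], h.2⟩
  have hIntY : Integrable Y P := hIntOf Y 1 hYmeas hYb'
  have hIntfY : Integrable (fun ω => (a ω - b ω) * Y ω) P := by
    refine hIntOf _ (Ka + Kb) ((ha.sub hb).mul hYmeas) (hYb'.mono fun ω h => ?_)
    rw [abs_mul]
    calc |a ω - b ω| * |Y ω| ≤ (Ka + Kb) * 1 :=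
      mul_le_mul (habB ω) h (abs_nonneg _) hK0
    _ = Ka + Kb := mul_one _
  have hIntgf : Integrable (fun ω => σ (c ω) * (a ω - b ω)) P := by
    refine hIntOf _ (Ka + Kb) (hgmeas.mul (ha.sub hb)) (ae_of_all _ fun ω => ?_)
    rw [abs_mul]
    calc |σ (c ω)| * |a ω - b ω| ≤ 1 * (Ka + Kb) :=
      mul_le_mul (hσ1 _) (habB ω) (abs_nonneg _) zero_le_one
    _ = Ka + Kb := one_mul _
  have hIntF : Integrable F P := hIntOf F _ hFmeas (ae_of_all _ hFB)
  have hIntIw : Integrable (fun ω => (∫ z in (0:ℝ)..(a ω), σ z) - Y ω * a ω) P := by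
    refine hIntOf _ (Ka + Ka) (hPa.sub (hYmeas.mul ha)) (hYb'.mono fun ω h => ?_)
    have h1 : |∫ z in (0:ℝ)..(a ω), σ z| ≤ Ka := (hprim _).trans (haB ω)
    have h2 : |Y ω * a ω| ≤ Ka := by
      rw [abs_mul]
      calc |Y ω| * |a ω| ≤ 1 * Ka := mul_le_mul h (haB ω) (abs_nonneg _) zero_le_one
      _ = Ka := one_mul _
    calc |(∫ z in (0:ℝ)..(a ω), σ z) - Y ω * a ω| ≤
        |∫ z in (0:ℝ)..(a ω), σ z| + |Y ω * a ω| := abs_sub _ _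
    _ ≤ Ka + Ka := add_le_add h1 h2
  have hIntIs : Integrable (fun ω => (∫ z in (0:ℝ)..(b ω), σ z) - Y ω * b ω) P := by
    refine hIntOf _ (Kb + Kb) (hPb.sub (hYmeas.mul hb)) (hYb'.mono fun ω h => ?_)
    have h1 : |∫ z in (0:ℝ)..(b ω), σ z| ≤ Kb := (hprim _).trans (hbB ω)
    have h2 : |Y ω * b ω| ≤ Kb := by
      rw [abs_mul]
      calc |Y ω| * |b ω| ≤ 1 * Kb := mul_le_mul h (hbB ω) (abs_nonneg _) zero_le_one
      _ = Kb := one_mul _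
    calc |(∫ z in (0:ℝ)..(b ω), σ z) - Y ω * b ω| ≤
        |∫ z in (0:ℝ)..(b ω), σ z| + |Y ω * b ω| := abs_sub _ _
    _ ≤ Kb + Kb := add_le_add h1 h2
  have hIntSq : Integrable (fun ω => (σ (a ω) - σ (c ω)) ^ 2) P := by
    refine hIntOf _ 1 (((hσmeas.comp ha).sub hgmeas).pow_const 2) (ae_of_all _ fun ω => ?_)
    rw [abs_of_nonneg (sq_nonneg _)]
    nlinarith [(hσr (a ω)).1, (hσr (a ω)).2, (hσr (c ω)).1, (hσr (c ω)).2]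
  -- conditional expectation step
  haveI : SigmaFinite (P.trim hm) := inferInstance
  have hfm' : StronglyMeasurable[m] (fun ω => a ω - b ω) := hfm.stronglyMeasurable
  have hIntfY' : Integrable ((fun ω => a ω - b ω) * Y) P := hIntfY
  have hpull : P[(fun ω => a ω - b ω) * Y | m] =ᵐ[P]
      (fun ω => a ω - b ω) * P[Y | m] :=
    condExp_mul_of_stronglyMeasurable_left hfm' hIntfY' hIntY
  have hint_eq : ∫ ω, (a ω - b ω) * Y ω ∂P = ∫ ω, (a ω - b ω) * σ (c ω) ∂P := by
    have h1 : ∫ ω, ((fun ω => a ω - b ω) * Y) ω ∂P =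
        ∫ ω, (P[(fun ω => a ω - b ω) * Y | m]) ω ∂P := (integral_condExp hm).symm
    have h2 : P[(fun ω => a ω - b ω) * Y | m] =ᵐ[P]
        fun ω => (a ω - b ω) * σ (c ω) := by
      refine hpull.trans ?_
      filter_upwards [hcond] with ω hω
      simp only [Pi.mul_apply, hω]
    calc ∫ ω, (a ω - b ω) * Y ω ∂P
        = ∫ ω, (P[(fun ω => a ω - b ω) * Y | m]) ω ∂P := h1
    _ = ∫ ω, (a ω - b ω) * σ (c ω) ∂P := integral_congr_ae h2
  -- excess risk identity
  have hzero : ∫ ω, (σ (c ω) * (a ω - b ω) - (a ω - b ω) * Y ω) ∂P = 0 := by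
    rw [integral_sub hIntgf hIntfY]
    have h1 : ∫ ω, σ (c ω) * (a ω - b ω) ∂P = ∫ ω, (a ω - b ω) * σ (c ω) ∂P := by
      apply integral_congr_ae
      filter_upwards with ω
      ring
    rw [h1, ← hint_eq, sub_self]
  have hIF : ∫ ω, F ω ∂P =
      (∫ ω, ((∫ z in (0:ℝ)..(a ω), σ z) - Y ω * a ω) ∂P) -
      ∫ ω, ((∫ z in (0:ℝ)..(b ω), σ z) - Y ω * b ω) ∂P := by
    have h1 : ∫ ω, (((∫ z in (0:ℝ)..(a ω), σ z) - Y ω * a ω) -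
        ((∫ z in (0:ℝ)..(b ω), σ z) - Y ω * b ω) - F ω) ∂P =
        ∫ ω, (σ (c ω) * (a ω - b ω) - (a ω - b ω) * Y ω) ∂P := by
      apply integral_congr_ae
      filter_upwards with ω
      rw [hFdef]
      ring
    have hIntIwIs : Integrable (fun ω => ((∫ z in (0:ℝ)..(a ω), σ z) - Y ω * a ω) -
        ((∫ z in (0:ℝ)..(b ω), σ z) - Y ω * b ω)) P := hIntIw.sub hIntIs
    rw [integral_sub hIntIwIs hIntF, integral_sub hIntIw hIntIs, hzero] at h1
    linarith
  -- pointwise bounds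
  have hboth : ∀ ω, ((σ (a ω) - σ (c ω)) ^ 2 ≤ 2 * G * F ω + 2 * G * M) ∧ (-M ≤ F ω) := by
    intro ω
    have hkey := sigma_key G hG σ hσm hσlip (c ω) (a ω)
    have hII : ∀ p q : ℝ, IntervalIntegrable (fun z => σ z - σ (c ω))
        MeasureTheory.volume p q := fun p q => (hσint p q).sub intervalIntegrable_const
    have hsplit : (∫ z in (c ω)..(a ω), (σ z - σ (c ω))) =
        (∫ z in (c ω)..(b ω), (σ z - σ (c ω))) + ∫ z in (b ω)..(a ω), (σ z - σ (c ω)) :=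
      (intervalIntegral.integral_add_adjacent_intervals (hII _ _) (hII _ _)).symm
    have h2 : |∫ z in (c ω)..(b ω), (σ z - σ (c ω))| ≤ M := by
      have hb1 := intervalIntegral.norm_integral_le_of_norm_le_const
        (C := 1) (f := fun z => σ z - σ (c ω)) (a := c ω) (b := b ω)
        (fun z _ => by
          simp only [Real.norm_eq_abs, abs_le]
          exact ⟨by linarith [(hσr z).1, (hσr (c ω)).2],
            by linarith [(hσr z).2, (hσr (c ω)).1]⟩)
      simp only [Real.norm_eq_abs, one_mul] at hb1
      have hbc : |b ω - c ω| ≤ M := by rw [abs_sub_comm]; exact hcB ω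
      linarith
    have h2' : (∫ z in (c ω)..(b ω), (σ z - σ (c ω))) ≤ M := (abs_le.mp h2).2
    have h2'' : -M ≤ ∫ z in (c ω)..(b ω), (σ z - σ (c ω)) := (abs_le.mp h2).1
    have hnn : 0 ≤ ∫ z in (c ω)..(a ω), (σ z - σ (c ω)) := by
      rcases le_total (c ω) (a ω) with hca | hca
      · exact intervalIntegral.integral_nonneg hca fun z hz => sub_nonneg.2 (hσm hz.1)
      · rw [intervalIntegral.integral_symm (a ω) (c ω), neg_nonneg]
        have hle : (∫ z in (a ω)..(c ω), (σ z - σ (c ω))) ≤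
            ∫ z in (a ω)..(c ω), (0:ℝ) :=
          intervalIntegral.integral_mono_on hca (hII _ _) intervalIntegrable_const
            (fun z hz => sub_nonpos.2 (hσm hz.2))
        simpa using hle
    constructor
    · rw [hFeq ω]
      have hmul : 2 * G * (∫ z in (c ω)..(b ω), (σ z - σ (c ω))) ≤ 2 * G * M :=
        mul_le_mul_of_nonneg_left h2' (by positivity)
      rw [hsplit] at hkey
      linarith [hkey, hmul]
    · rw [hFeq ω]
      have := hsplit
      linarith
  -- integrate the pointwise bound
  have hIntRHS : Integrable (fun ω => 2 * G * F ω + 2 * G * M) P :=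
    (hIntF.const_mul _).add (integrable_const _)
  have hmain : (∫ ω, (σ (a ω) - σ (c ω)) ^ 2 ∂P) ≤
      ∫ ω, (2 * G * F ω + 2 * G * M) ∂P :=
    integral_mono hIntSq hIntRHS fun ω => (hboth ω).1
  have hR : (∫ ω, (2 * G * F ω + 2 * G * M) ∂P) = 2 * G * (∫ ω, F ω ∂P) + 2 * G * M := by
    rw [integral_add (hIntF.const_mul _) (integrable_const _), integral_const_mul,
      integral_const]
    simp [measure_univ]
  have hFlb : -M ≤ ∫ ω, F ω ∂P := by
    have h1 : (∫ ω, (-M : ℝ) ∂P) ≤ ∫ ω, F ω ∂P :=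
      integral_mono (integrable_const _) hIntF fun ω => (hboth ω).2
    simpa [measure_univ] using h1
  -- put everything together
  have e1 : (∫ ω, (∫ z in (0:ℝ)..(a ω), (σ z - Y ω)) ∂P) =
      ∫ ω, ((∫ z in (0:ℝ)..(a ω), σ z) - Y ω * a ω) ∂P :=
    integral_congr_ae (Filter.Eventually.of_forall hIw)
  have e2 : (∫ ω, (∫ z in (0:ℝ)..(b ω), (σ z - Y ω)) ∂P) =
      ∫ ω, ((∫ z in (0:ℝ)..(b ω), σ z) - Y ω * b ω) ∂P :=
    integral_congr_ae (Filter.Eventually.of_forall hIs)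
  rw [e1, e2, ← hIF]
  have hprod : 2 * G * (-M) ≤ 2 * G * (∫ ω, F ω ∂P) :=
    mul_le_mul_of_nonneg_left hFlb (by positivity)
  have hGM2 : (0:ℝ) ≤ 2 * G ^ 2 * M ^ 2 := by positivity
  have hGM : (0:ℝ) ≤ G * M := mul_nonneg hG.le hM
  linarith [hmain, hR]

/-- Under the noisy-feature well-specified model
(`σ : ℝ → [0,1]` nondecreasing `G`-Lipschitz, `‖ψ(x)‖ ≤ 1`, `|φ(x)| ≤ M`,
`y ∈ [0,1]` a.s., `E[y|x] = σ(⟨w*, ψ(x)⟩ + φ(x))` a.s.), for every `w ∈ ℝ^k`: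
`E[(σ(⟨w, ψ(x)⟩) − σ(⟨w*, ψ(x)⟩ + φ(x)))²] ≤ 4G (L^ℓ_P(w) − L^ℓ_P(w*)) + 2G²M² + 8GM`. -/
theorem noisy_feature_excess_risk_bound {d k : ℕ} (G M : ℝ) (hG : 0 < G) (hM : 0 ≤ M)
    (σ : ℝ → ℝ) (hσm : Monotone σ) (hσr : ∀ z, σ z ∈ Set.Icc (0 : ℝ) 1)
    (hσlip : ∀ a b : ℝ, |σ a - σ b| ≤ G * |a - b|)
    (ψ : EuclideanSpace ℝ (Fin d) → EuclideanSpace ℝ (Fin k)) (hψmeas : Measurable ψ)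
    (hψ : ∀ x, ‖ψ x‖ ≤ 1)
    (φ : EuclideanSpace ℝ (Fin d) → ℝ) (hφmeas : Measurable φ) (hφ : ∀ x, |φ x| ≤ M)
    (P : Measure (EuclideanSpace ℝ (Fin d) × ℝ)) [IsProbabilityMeasure P]
    (wstar : EuclideanSpace ℝ (Fin k))
    (hy : ∀ᵐ p ∂P, p.2 ∈ Set.Icc (0 : ℝ) 1)
    (hcond :
      P[(fun p : EuclideanSpace ℝ (Fin d) × ℝ => p.2) |
          MeasurableSpace.comap Prod.fst inferInstance] =ᵐ[P]
        fun p => σ (⟪wstar, ψ p.1⟫ + φ p.1))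
    (w : EuclideanSpace ℝ (Fin k)) :
    (∫ p, (σ ⟪w, ψ p.1⟫ - σ (⟪wstar, ψ p.1⟫ + φ p.1)) ^ 2 ∂P) ≤
      4 * G * ((∫ p, (∫ z in (0:ℝ)..(⟪w, ψ p.1⟫), (σ z - p.2)) ∂P) -
          ∫ p, (∫ z in (0:ℝ)..(⟪wstar, ψ p.1⟫), (σ z - p.2)) ∂P) +
        2 * G ^ 2 * M ^ 2 + 8 * G * M := by
  have hinner : ∀ (v : EuclideanSpace ℝ (Fin k)) (x : EuclideanSpace ℝ (Fin d)),
      |⟪v, ψ x⟫| ≤ ‖v‖ := by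
    intro v x
    calc |⟪v, ψ x⟫| ≤ ‖v‖ * ‖ψ x‖ := abs_real_inner_le_norm _ _
    _ ≤ ‖v‖ * 1 := mul_le_mul_of_nonneg_left (hψ x) (norm_nonneg _)
    _ = ‖v‖ := mul_one _
  have hinnermeas : ∀ v : EuclideanSpace ℝ (Fin k),
      Measurable (fun x : EuclideanSpace ℝ (Fin d) => ⟪v, ψ x⟫) := fun v =>
    measurable_const.inner hψmeas
  have hm : MeasurableSpace.comap (Prod.fst : EuclideanSpace ℝ (Fin d) × ℝ →
      EuclideanSpace ℝ (Fin d)) inferInstance ≤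
      (inferInstance : MeasurableSpace (EuclideanSpace ℝ (Fin d) × ℝ)) :=
    measurable_iff_comap_le.mp measurable_fst
  have hfst : @Measurable _ _ (MeasurableSpace.comap (Prod.fst :
      EuclideanSpace ℝ (Fin d) × ℝ → EuclideanSpace ℝ (Fin d)) inferInstance) _
      Prod.fst := measurable_iff_comap_le.mpr le_rfl
  have hfm : @Measurable _ _ (MeasurableSpace.comap (Prod.fst :
      EuclideanSpace ℝ (Fin d) × ℝ → EuclideanSpace ℝ (Fin d)) inferInstance) _
      (fun p : EuclideanSpace ℝ (Fin d) × ℝ => ⟪w, ψ p.1⟫ - ⟪wstar, ψ p.1⟫) :=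
    ((hinnermeas w).sub (hinnermeas wstar)).comp hfst
  exact main_aux _ P G M hG hM σ hσm hσr hσlip
    (fun p => ⟪w, ψ p.1⟫) (fun p => ⟪wstar, ψ p.1⟫)
    (fun p => ⟪wstar, ψ p.1⟫ + φ p.1) (fun p => p.2)
    ((hinnermeas w).comp measurable_fst) ((hinnermeas wstar).comp measurable_fst)
    (((hinnermeas wstar).comp measurable_fst).add (hφmeas.comp measurable_fst))
    measurable_snd
    ‖w‖ ‖wstar‖ (fun p => hinner w p.1) (fun p => hinner wstar p.1)
    (fun p => by simpa using hφ p.1)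
    hy hm hfm hcond
end

section
/- Let σ(z) = max{0, z} be the ReLU function, let d ≥ 1, B > 0, μ > 0, and let P be a probability distribution of (x, y) ∈ ℝ^d × ℝ with ‖x‖₂ ≤ √d almost surely and |y| ≤ B almost surely. Define L_P(w) = E[(σ(⟨w, x⟩) − y)²] and χ_P^{σ_w} = E[σ(⟨w, x⟩)·x], χ_P = E[y·x]. Fix w, w* ∈ ℝ^d and suppose: (i) ‖χ_P^{σ_{w*}} − χ_P‖₂² ≤ L_P(w*), and (ii) E[(σ(⟨w, x⟩) − σ(⟨w*, x⟩))²] ≤ μ·‖χ_P^{σ_w} − χ_P^{σ_{w*}}‖₂². Then L_P(w) ≤ 2(1 + 2μ)·L_P(w*) + 4μ·‖χ_P^{σ_w} − χ_P‖₂², where χ_P^{σ_w} − χ_P = E[(σ(⟨w, x⟩) − y)·x] is the gradient of the surrogate population risk at w. -/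
/-! The pointwise inequality `(a - y)² ≤ 2(a - b)² + 2(b - y)²` and its analogue for the
correlation vectors `χ` reduce the claim to the two hypotheses: (ii) bounds the excess
`E[(σ_w - σ_{w*})²]` by `μ ‖χ^{σ_w} - χ^{σ_{w*}}‖²`, which is split through `χ_P`, and (i)
absorbs the resulting term `‖χ^{σ_{w*}} - χ_P‖²` into `L_P(w*)`. -/

open MeasureTheory
open scoped RealInnerProductSpace

section SquareLoss

variable {α E : Type*} [MeasurableSpace α] {P : Measure α} [NormedAddCommGroup E]

theorem integral_sq_sub_le_two_mul_add {f g h : α → ℝ}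
    (hfg : Integrable (fun a => (f a - g a) ^ 2) P)
    (hgh : Integrable (fun a => (g a - h a) ^ 2) P) :
    ∫ a, (f a - h a) ^ 2 ∂P ≤ 2 * ∫ a, (f a - g a) ^ 2 ∂P + 2 * ∫ a, (g a - h a) ^ 2 ∂P := by
  rw [← integral_const_mul, ← integral_const_mul, ← integral_add (hfg.const_mul 2)
    (hgh.const_mul 2)]
  refine integral_mono_of_nonneg (.of_forall fun a => sq_nonneg _)
    ((hfg.const_mul 2).add (hgh.const_mul 2)) (.of_forall fun a => ?_)
  simpa [mul_add] using add_sq_le (a := f a - g a) (b := g a - h a)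

theorem norm_sub_sq_le_two_mul_add (a b c : E) :
    ‖a - b‖ ^ 2 ≤ 2 * ‖a - c‖ ^ 2 + 2 * ‖b - c‖ ^ 2 := by
  calc ‖a - b‖ ^ 2 ≤ (‖a - c‖ + ‖b - c‖) ^ 2 := by
        gcongr
        simpa [norm_sub_rev c b] using norm_sub_le_norm_sub_add_norm_sub a c b
    _ ≤ 2 * ‖a - c‖ ^ 2 + 2 * ‖b - c‖ ^ 2 := by linarith [add_sq_le (a := ‖a - c‖) (b := ‖b - c‖)]

/-- Abstract form of the risk bound: `f`, `g`, `y` play `σ_w`, `σ_{w*}`, the label and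
`u`, `v`, `c` the vectors `χ^{σ_w}`, `χ^{σ_{w*}}`, `χ_P`. -/
theorem integral_sq_sub_le_of_excess_le {f g y : α → ℝ} {u v c : E} {μ : ℝ} (hμ : 0 ≤ μ)
    (hfg : Integrable (fun a => (f a - g a) ^ 2) P)
    (hgy : Integrable (fun a => (g a - y a) ^ 2) P)
    (hi : ‖v - c‖ ^ 2 ≤ ∫ a, (g a - y a) ^ 2 ∂P)
    (hii : ∫ a, (f a - g a) ^ 2 ∂P ≤ μ * ‖u - v‖ ^ 2) :
    ∫ a, (f a - y a) ^ 2 ∂P ≤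
      2 * (1 + 2 * μ) * ∫ a, (g a - y a) ^ 2 ∂P + 4 * μ * ‖u - c‖ ^ 2 := by
  have hsplit := integral_sq_sub_le_two_mul_add hfg hgy
  have hexcess : ∫ a, (f a - g a) ^ 2 ∂P ≤ μ * (2 * ‖u - c‖ ^ 2 + 2 * ‖v - c‖ ^ 2) :=
    hii.trans (mul_le_mul_of_nonneg_left (norm_sub_sq_le_two_mul_add u v c) hμ)
  have hcorr := mul_le_mul_of_nonneg_left hi hμ
  linarith

end SquareLoss

section FiniteMeasure

variable {α : Type*} [MeasurableSpace α] {P : Measure α} [IsFiniteMeasure P]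

theorem integrable_sq_sub_of_ae_bound {f g : α → ℝ} {Cf Cg : ℝ}
    (hf : AEStronglyMeasurable f P) (hg : AEStronglyMeasurable g P)
    (hfC : ∀ᵐ a ∂P, |f a| ≤ Cf) (hgC : ∀ᵐ a ∂P, |g a| ≤ Cg) :
    Integrable (fun a => (f a - g a) ^ 2) P :=
  (((memLp_top_of_bound hf Cf hfC).sub (memLp_top_of_bound hg Cg hgC)).mono_exponent
    le_top).integrable_sq

end FiniteMeasure

section ReLU

variable {F : Type*} [NormedAddCommGroup F] [InnerProductSpace ℝ F]

theorem abs_max_zero_inner_le (v x : F) :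
    |max 0 ⟪v, x⟫| ≤ ‖v‖ * ‖x‖ :=
  (abs_max_le_max_abs_abs.trans (max_le (by simp) le_rfl)).trans
    (abs_real_inner_le_norm v x)

theorem ae_abs_max_zero_inner_le {Ω : Type*} [MeasurableSpace Ω] {Q : Measure Ω} {X : Ω → F}
    {R : ℝ} (hX : ∀ᵐ ω ∂Q, ‖X ω‖ ≤ R) (v : F) :
    ∀ᵐ ω ∂Q, |max 0 ⟪v, X ω⟫| ≤ ‖v‖ * R := by
  filter_upwards [hX] with ω hω
  exact (abs_max_zero_inner_le v (X ω)).trans (mul_le_mul_of_nonneg_left hω (norm_nonneg v))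

end ReLU

theorem relu_misspecified_risk_bound_general {d : ℕ} (B μ : ℝ)
    (hμ : 0 < μ)
    (P : Measure (EuclideanSpace ℝ (Fin d) × ℝ)) [IsProbabilityMeasure P]
    (hx : ∀ᵐ p ∂P, ‖p.1‖ ≤ Real.sqrt d)
    (hy : ∀ᵐ p ∂P, |p.2| ≤ B)
    (w wstar : EuclideanSpace ℝ (Fin d))
    (hi : ‖(∫ p, max 0 ⟪wstar, p.1⟫ • p.1 ∂P) - ∫ p, p.2 • p.1 ∂P‖ ^ 2 ≤
      ∫ p, (max 0 ⟪wstar, p.1⟫ - p.2) ^ 2 ∂P)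
    (hii : (∫ p, (max 0 ⟪w, p.1⟫ - max 0 ⟪wstar, p.1⟫) ^ 2 ∂P) ≤
      μ * ‖(∫ p, max 0 ⟪w, p.1⟫ • p.1 ∂P) - ∫ p, max 0 ⟪wstar, p.1⟫ • p.1 ∂P‖ ^ 2) :
    (∫ p, (max 0 ⟪w, p.1⟫ - p.2) ^ 2 ∂P) ≤
        2 * (1 + 2 * μ) * (∫ p, (max 0 ⟪wstar, p.1⟫ - p.2) ^ 2 ∂P) +
          4 * μ * ‖(∫ p, max 0 ⟪w, p.1⟫ • p.1 ∂P) - ∫ p, p.2 • p.1 ∂P‖ ^ 2 ∧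
      (∫ p, max 0 ⟪w, p.1⟫ • p.1 ∂P) - (∫ p, p.2 • p.1 ∂P) =
        ∫ p, (max 0 ⟪w, p.1⟫ - p.2) • p.1 ∂P := by
  have hrelu (v : EuclideanSpace ℝ (Fin d)) :
      AEStronglyMeasurable (fun p : EuclideanSpace ℝ (Fin d) × ℝ => max 0 ⟪v, p.1⟫) P := by
    fun_prop
  have hσ := ae_abs_max_zero_inner_le (X := Prod.fst) hx
  have hfeature : Integrable (fun p : EuclideanSpace ℝ (Fin d) × ℝ => p.1) P :=
    .of_bound (by fun_prop) _ hx
  refine ⟨integral_sq_sub_le_of_excess_le hμ.le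
    (integrable_sq_sub_of_ae_bound (hrelu w) (hrelu wstar) (hσ w) (hσ wstar))
    (integrable_sq_sub_of_ae_bound (hrelu wstar) (by fun_prop) (hσ wstar) hy) hi hii, ?_⟩
  simp_rw [sub_smul]
  exact (integral_sub (hfeature.bdd_smul _ (hrelu w) (hσ w))
    (hfeature.bdd_smul _ continuous_snd.aestronglyMeasurable hy)).symm

/-- For the ReLU link `σ(z) = max 0 z`, a distribution `P` with
`‖x‖ ≤ √d` and `|y| ≤ B` a.s., and `w, w* ∈ ℝ^d` satisfying
(i) `‖χ_P^{σ_{w*}} − χ_P‖² ≤ L_P(w*)` and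
(ii) `E[(σ(⟨w,x⟩) − σ(⟨w*,x⟩))²] ≤ μ ‖χ_P^{σ_w} − χ_P^{σ_{w*}}‖²`,
one has `L_P(w) ≤ 2(1 + 2μ) L_P(w*) + 4μ ‖χ_P^{σ_w} − χ_P‖²`, where
`χ_P^{σ_w} − χ_P = E[(σ(⟨w,x⟩) − y)·x]` is the gradient of the surrogate population
risk at `w`. -/
theorem relu_misspecified_risk_bound {d : ℕ} (hd : 1 ≤ d) (B μ : ℝ)
    (hB : 0 < B) (hμ : 0 < μ)
    (P : Measure (EuclideanSpace ℝ (Fin d) × ℝ)) [IsProbabilityMeasure P]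
    (hx : ∀ᵐ p ∂P, ‖p.1‖ ≤ Real.sqrt d)
    (hy : ∀ᵐ p ∂P, |p.2| ≤ B)
    (w wstar : EuclideanSpace ℝ (Fin d))
    (hi : ‖(∫ p, max 0 ⟪wstar, p.1⟫ • p.1 ∂P) - ∫ p, p.2 • p.1 ∂P‖ ^ 2 ≤
      ∫ p, (max 0 ⟪wstar, p.1⟫ - p.2) ^ 2 ∂P)
    (hii : (∫ p, (max 0 ⟪w, p.1⟫ - max 0 ⟪wstar, p.1⟫) ^ 2 ∂P) ≤
      μ * ‖(∫ p, max 0 ⟪w, p.1⟫ • p.1 ∂P) - ∫ p, max 0 ⟪wstar, p.1⟫ • p.1 ∂P‖ ^ 2) :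
    (∫ p, (max 0 ⟪w, p.1⟫ - p.2) ^ 2 ∂P) ≤
        2 * (1 + 2 * μ) * (∫ p, (max 0 ⟪wstar, p.1⟫ - p.2) ^ 2 ∂P) +
          4 * μ * ‖(∫ p, max 0 ⟪w, p.1⟫ • p.1 ∂P) - ∫ p, p.2 • p.1 ∂P‖ ^ 2 ∧
      (∫ p, max 0 ⟪w, p.1⟫ • p.1 ∂P) - (∫ p, p.2 • p.1 ∂P) =
        ∫ p, (max 0 ⟪w, p.1⟫ - p.2) • p.1 ∂P :=
  relu_misspecified_risk_bound_general B μ hμ P hx hy w wstar hi hii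
end
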